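/- Let T be a finite set, let X be an S-open subset of a product ∏_{t∈T} X_t of topological spaces, and let (Y,d) be a metric space. Then every strongly separately continuous mapping f : (X,τ) → Y is continuous with respect to the Tychonoff topology τ. -/

import Mathlib

/-!
Pass from `x` to `a` by replacing the coordinates of `x` by those of `a` one at a time.
Each of the finitely many steps moves `f` by an amount tending to `0` as `x → a`: it is the
strong separate continuity of `f` at `a`, composed with the continuous map "replace the
coordinates done so far", which fixes `a`. The triangle inequality sums these up.
-/

open Function Filter Topology

/-- `Sigma1 x` (σ₁(x)): the set of points differing from `x` in at most one coordinate. -/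
def Sigma1 {T : Type*} {X : T → Type*} (x : ∀ t, X t) : Set (∀ t, X t) :=
  {y | {t | y t ≠ x t}.Subsingleton}

/-- A set `A` is `S`-open if `σ₁(x) ⊆ A` for every `x ∈ A`. -/
def SOpen {T : Type*} {X : T → Type*} (A : Set (∀ t, X t)) : Prop :=
  ∀ x ∈ A, Sigma1 x ⊆ A

theorem update_mem {T : Type*} [DecidableEq T] {X : T → Type*} {A : Set (∀ t, X t)}
    (hA : SOpen A) {x : ∀ t, X t} (hx : x ∈ A) (t : T) (v : X t) :
    Function.update x t v ∈ A := by
  apply hA x hx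
  intro s hs s' hs'
  simp only [Set.mem_setOf_eq] at hs hs'
  have h1 : s = t := by
    by_contra h
    exact hs (Function.update_of_ne h v x)
  have h2 : s' = t := by
    by_contra h
    exact hs' (Function.update_of_ne h v x)
  rw [h1, h2]

/-- The point `x_t^v`: `x` with its `t`-th coordinate replaced by `v`, as an element
of the `S`-open set `A`. -/
def updPt {T : Type*} [DecidableEq T] {X : T → Type*} {A : Set (∀ t, X t)}
    (hA : SOpen A) (x : ↥A) (t : T) (v : X t) : ↥A :=
  ⟨Function.update x.1 t v, update_mem hA x.2 t v⟩

/-- `f : (A, T') → Y` is strongly separately continuous at `a` (w.r.t. every variable):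
for each `t`, `lim_{x → a} dist (f x) (f (x_t^a)) = 0`, the limit taken in `T'`. -/
def StrSepContAt {T : Type*} [DecidableEq T] {X : T → Type*} {A : Set (∀ t, X t)}
    (hA : SOpen A) (T' : TopologicalSpace ↥A) {Y : Type*} [MetricSpace Y]
    (f : ↥A → Y) (a : ↥A) : Prop :=
  ∀ t : T, Filter.Tendsto (fun x : ↥A => dist (f x) (f (updPt hA x t (a.1 t))))
    (@nhds _ T' a) (nhds 0)

namespace SOpen

variable {T : Type*} [DecidableEq T] {X : T → Type*} {A : Set (∀ t, X t)}

theorem piecewise_mem (hA : SOpen A) (S : Finset T) (a : ∀ t, X t) {x : ∀ t, X t}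
    (hx : x ∈ A) : S.piecewise a x ∈ A := by
  induction S using Finset.induction_on with
  | empty => simpa
  | insert t S _ ih =>
    rw [Finset.piecewise_insert]
    exact update_mem hA ih t (a t)

def piecewisePt (hA : SOpen A) (S : Finset T) (a x : ↥A) : ↥A :=
  ⟨S.piecewise a.1 x.1, hA.piecewise_mem S a.1 x.2⟩

theorem piecewisePt_insert (hA : SOpen A) (t : T) (S : Finset T) (a x : ↥A) :
    hA.piecewisePt (insert t S) a x = updPt hA (hA.piecewisePt S a x) t (a.1 t) :=
  Subtype.ext (Finset.piecewise_insert ..)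

theorem piecewisePt_self (hA : SOpen A) (S : Finset T) (a : ↥A) :
    hA.piecewisePt S a a = a :=
  Subtype.ext (Finset.piecewise_same ..)

theorem piecewisePt_univ [Fintype T] (hA : SOpen A) (a x : ↥A) :
    hA.piecewisePt Finset.univ a x = a :=
  Subtype.ext (Finset.piecewise_univ ..)

theorem continuous_piecewisePt [∀ t, TopologicalSpace (X t)] (hA : SOpen A) (S : Finset T)
    (a : ↥A) : Continuous (hA.piecewisePt S a) := by
  refine Continuous.subtype_mk (continuous_pi fun t => ?_) _
  by_cases ht : t ∈ S
  · simp only [Finset.piecewise_eq_of_mem _ _ _ ht]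
    exact continuous_const
  · simp only [Finset.piecewise_eq_of_notMem _ _ _ ht]
    exact (continuous_apply t).comp continuous_subtype_val

end SOpen

theorem StrSepContAt.tendsto_dist_piecewisePt {T : Type*} [DecidableEq T] {X : T → Type*}
    [∀ t, TopologicalSpace (X t)] {A : Set (∀ t, X t)} {hA : SOpen A} {Y : Type*}
    [MetricSpace Y] {f : ↥A → Y} {a : ↥A} (hf : StrSepContAt hA inferInstance f a)
    (S : Finset T) :
    Tendsto (fun x => dist (f x) (f (hA.piecewisePt S a x))) (𝓝 a) (𝓝 0) := by
  induction S using Finset.induction_on with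
  | empty => simp [SOpen.piecewisePt]
  | insert t S _ ih =>
    have hstep : Tendsto (fun x => dist (f (hA.piecewisePt S a x))
        (f (updPt hA (hA.piecewisePt S a x) t (a.1 t)))) (𝓝 a) (𝓝 0) := by
      refine (hf t).comp ?_
      simpa [hA.piecewisePt_self] using (hA.continuous_piecewisePt S a).tendsto a
    refine squeeze_zero (fun _ => dist_nonneg) (fun x => ?_) (by simpa using ih.add hstep)
    rw [hA.piecewisePt_insert]
    exact dist_triangle _ _ _

theorem StrSepContAt.continuousAt {T : Type*} [DecidableEq T] [Finite T] {X : T → Type*}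
    [∀ t, TopologicalSpace (X t)] {A : Set (∀ t, X t)} {hA : SOpen A} {Y : Type*}
    [MetricSpace Y] {f : ↥A → Y} {a : ↥A} (hf : StrSepContAt hA inferInstance f a) :
    ContinuousAt f a := by
  have := Fintype.ofFinite T
  rw [ContinuousAt, tendsto_iff_dist_tendsto_zero]
  simpa [hA.piecewisePt_univ] using hf.tendsto_dist_piecewisePt Finset.univ

/-- Over a finite index set, every strongly separately continuous mapping on an S-open
set with the Tychonoff topology is continuous. -/
theorem strSepCont_continuous_of_finite {T : Type*} [DecidableEq T] [Finite T]
    {X : T → Type*} [∀ t, TopologicalSpace (X t)] {A : Set (∀ t, X t)} (hA : SOpen A)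
    {Y : Type*} [MetricSpace Y] (f : ↥A → Y)
    (hf : ∀ a : ↥A, StrSepContAt hA inferInstance f a) :
    Continuous f :=
  continuous_iff_continuousAt.2 fun a => (hf a).continuousAt
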